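/- For every formula φ of TL[#←,Y,MOD] of depth at most k, there exists a formula φ' of TL[#←,Y,MOD] of depth at most k in Y-normal form such that for all nonempty strings w and all positions 1 ≤ i ≤ |w|: w,i ⊨ φ if and only if w,i ⊨ φ'. -/
import Mathlib


mutual
  /-- Formulas of TL[#←,Y,MOD]: TL with counting, the previous-position operator `Y`,
  and the positional predicates `MOD_m^r`. -/
  inductive YFormula (σ : Type) : Type
    | sym : σ → YFormula σ
    | mod : ℕ → ℕ → YFormula σ
    | yop : YFormula σ → YFormula σ
    | lt : YTerm σ → YTerm σ → YFormula σ
    | not : YFormula σ → YFormula σ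
    | and : YFormula σ → YFormula σ → YFormula σ
  /-- Terms of TL[#←,Y,MOD]. -/
  inductive YTerm (σ : Type) : Type
    | countL : YFormula σ → YTerm σ
    | add : YTerm σ → YTerm σ → YTerm σ
    | one : YTerm σ
end

mutual
  /-- Satisfaction `w,i ⊨ φ` (positions are 0-indexed, `0 ≤ i < |w|`):
  `MOD_m^r` holds at the (1-indexed) position `i+1` iff `i+1 ≡ r (mod m)`, and
  `Yφ` holds at position `i` iff `i > 0` and `φ` holds at position `i−1`. -/
  def YFormula.sat {σ : Type} [DecidableEq σ] : YFormula σ → List σ → ℕ → Bool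
    | .sym c, w, i => decide (w[i]? = some c)
    | .mod m r, _, i => decide ((i + 1) % m = r % m)
    | .yop φ, w, i => decide (0 < i) && YFormula.sat φ w (i - 1)
    | .lt t₁ t₂, w, i => decide (YTerm.val t₁ w i < YTerm.val t₂ w i)
    | .not φ, w, i => !(YFormula.sat φ w i)
    | .and φ₁ φ₂, w, i => YFormula.sat φ₁ w i && YFormula.sat φ₂ w i
  /-- Value `t^{w,i}` of a term; `#←[φ]^{w,i}` counts positions `j ≤ i` with `w,j ⊨ φ`. -/
  def YTerm.val {σ : Type} [DecidableEq σ] : YTerm σ → List σ → ℕ → ℕ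
    | .countL φ, w, i => ((List.range (i + 1)).filter (fun j => YFormula.sat φ w j)).length
    | .add t₁ t₂, w, i => YTerm.val t₁ w i + YTerm.val t₂ w i
    | .one, _, _ => 1
end

mutual
  /-- Nesting depth of `#←` in a formula (`Y` and `MOD` do not count). -/
  def YFormula.depth {σ : Type} : YFormula σ → ℕ
    | .sym _ => 0
    | .mod _ _ => 0
    | .yop φ => YFormula.depth φ
    | .lt t₁ t₂ => max (YTerm.depth t₁) (YTerm.depth t₂)
    | .not φ => YFormula.depth φ
    | .and φ₁ φ₂ => max (YFormula.depth φ₁) (YFormula.depth φ₂)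
  /-- Nesting depth of `#←` in a term. -/
  def YTerm.depth {σ : Type} : YTerm σ → ℕ
    | .countL φ => YFormula.depth φ + 1
    | .add t₁ t₂ => max (YTerm.depth t₁) (YTerm.depth t₂)
    | .one => 0
end

/-- A formula of the form `Y^c Q_σ` or `Y^c MOD_m^r` for some `c ≥ 0`. -/
def YFormula.isYAtom {σ : Type} : YFormula σ → Prop
  | .sym _ => True
  | .mod _ _ => True
  | .yop φ => YFormula.isYAtom φ
  | _ => False

mutual
  /-- `Y`-normal form: the operator `Y` is only applied (iterated) to the atomic
  formulas `Q_σ` and `MOD_m^r`. -/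
  def YFormula.inYNF {σ : Type} : YFormula σ → Prop
    | .sym _ => True
    | .mod _ _ => True
    | .yop φ => YFormula.isYAtom φ
    | .lt t₁ t₂ => YTerm.inYNF t₁ ∧ YTerm.inYNF t₂
    | .not φ => YFormula.inYNF φ
    | .and φ₁ φ₂ => YFormula.inYNF φ₁ ∧ YFormula.inYNF φ₂
  /-- `Y`-normal form for terms. -/
  def YTerm.inYNF {σ : Type} : YTerm σ → Prop
    | .countL φ => YFormula.inYNF φ
    | .add t₁ t₂ => YTerm.inYNF t₁ ∧ YTerm.inYNF t₂
    | .one => True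
end

/-- Iterated application of `Y`. -/
def ypow {σ : Type} : ℕ → YFormula σ → YFormula σ
  | 0, φ => φ
  | c + 1, φ => .yop (ypow c φ)

lemma ypow_depth {σ : Type} (c : ℕ) (φ : YFormula σ) :
    (ypow c φ).depth = φ.depth := by
  induction c with
  | zero => rfl
  | succ c ih => simp [ypow, YFormula.depth, ih]

lemma ypow_sat {σ : Type} [DecidableEq σ] (c : ℕ) (φ : YFormula σ) (w : List σ) (i : ℕ) :
    (ypow c φ).sat w i = (decide (c ≤ i) && φ.sat w (i - c)) := by
  induction c generalizing i with
  | zero => simp [ypow]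
  | succ c ih =>
    simp only [ypow, YFormula.sat, ih]
    by_cases h : c + 1 ≤ i
    · have h0 : 0 < i := by omega
      have h1 : c ≤ i - 1 := by omega
      have h2 : i - 1 - c = i - (c + 1) := by omega
      simp [h, h0, h1, h2]
    · rcases Nat.eq_zero_or_pos i with h0 | h0
      · simp [h, h0]
      · have h1 : ¬ c ≤ i - 1 := by omega
        simp [h, h0, h1]

lemma ypow_isYAtom {σ : Type} (c : ℕ) (φ : YFormula σ) (h : φ.isYAtom) :
    (ypow c φ).isYAtom := by
  induction c with
  | zero => exact h
  | succ c ih => exact ih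

lemma ypow_inYNF_mod {σ : Type} (c m r : ℕ) :
    (ypow c (YFormula.mod m r) : YFormula σ).inYNF := by
  cases c with
  | zero => trivial
  | succ c => exact ypow_isYAtom c _ trivial

lemma ypow_inYNF_sym {σ : Type} (c : ℕ) (s : σ) :
    (ypow c (YFormula.sym s)).inYNF := by
  cases c with
  | zero => trivial
  | succ c => exact ypow_isYAtom c _ trivial

mutual
  /-- Normal form of `Y^c φ`. -/
  def nfY {σ : Type} : ℕ → YFormula σ → YFormula σ
    | c, .sym s => ypow c (.sym s)
    | c, .mod m r => ypow c (.mod m r)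
    | c, .yop φ => nfY (c + 1) φ
    | c, .lt t₁ t₂ => .and (ypow c (.mod 1 0)) (.lt (nfT c t₁) (nfT c t₂))
    | c, .not φ => .and (ypow c (.mod 1 0)) (.not (nfY c φ))
    | c, .and φ ψ => .and (nfY c φ) (nfY c ψ)
  /-- Normal form of a term shifted `c` positions back. -/
  def nfT {σ : Type} : ℕ → YTerm σ → YTerm σ
    | c, .countL φ => .countL (nfY c φ)
    | c, .add t₁ t₂ => .add (nfT c t₁) (nfT c t₂)
    | _, .one => .one
end

mutual
  lemma nfY_depth {σ : Type} : ∀ (c : ℕ) (φ : YFormula σ),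
      (nfY c φ).depth = φ.depth
    | c, .sym s => ypow_depth c _
    | c, .mod m r => ypow_depth c _
    | c, .yop φ => nfY_depth (c + 1) φ
    | c, .lt t₁ t₂ => by
        simp [nfY, YFormula.depth, ypow_depth, nfT_depth]
    | c, .not φ => by
        simp [nfY, YFormula.depth, ypow_depth, nfY_depth]
    | c, .and φ ψ => by
        simp [nfY, YFormula.depth, nfY_depth]
  lemma nfT_depth {σ : Type} : ∀ (c : ℕ) (t : YTerm σ),
      (nfT c t).depth = t.depth
    | c, .countL φ => by simp [nfT, YTerm.depth, nfY_depth]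
    | c, .add t₁ t₂ => by simp [nfT, YTerm.depth, nfT_depth]
    | _, .one => rfl
end

mutual
  lemma nfY_inYNF {σ : Type} : ∀ (c : ℕ) (φ : YFormula σ), (nfY c φ).inYNF
    | c, .sym s => ypow_inYNF_sym c s
    | c, .mod m r => ypow_inYNF_mod c m r
    | c, .yop φ => nfY_inYNF (c + 1) φ
    | c, .lt t₁ t₂ =>
        ⟨ypow_inYNF_mod c 1 0, nfT_inYNF c t₁, nfT_inYNF c t₂⟩
    | c, .not φ => ⟨ypow_inYNF_mod c 1 0, nfY_inYNF c φ⟩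
    | c, .and φ ψ => ⟨nfY_inYNF c φ, nfY_inYNF c ψ⟩
  lemma nfT_inYNF {σ : Type} : ∀ (c : ℕ) (t : YTerm σ), (nfT c t).inYNF
    | c, .countL φ => nfY_inYNF c φ
    | c, .add t₁ t₂ => ⟨nfT_inYNF c t₁, nfT_inYNF c t₂⟩
    | _, .one => trivial
end

lemma filter_shift (c : ℕ) (q : ℕ → Bool) :
    ∀ n, ((List.range (c + n)).filter
        (fun j => decide (c ≤ j) && q (j - c))).length
      = ((List.range n).filter q).length := by
  intro n
  induction n with
  | zero =>
    simp only [Nat.add_zero, List.range_zero, List.filter_nil, List.length_nil]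
    rw [List.length_eq_zero_iff]
    apply List.filter_eq_nil_iff.2
    intro j hj
    simp only [List.mem_range] at hj
    simp [Nat.not_le.2 hj]
  | succ n ih =>
    rw [Nat.add_succ, List.range_succ, List.range_succ,
      List.filter_append, List.filter_append]
    have h1 : decide (c ≤ c + n) = true := by simp
    have h2 : c + n - c = n := by omega
    simp only [List.length_append, ih, List.filter_cons, List.filter_nil,
      h1, h2, Bool.true_and]
    by_cases hq : q n = true <;> simp [hq]

mutual
  lemma nfY_sat {σ : Type} [DecidableEq σ] :
      ∀ (c : ℕ) (φ : YFormula σ) (w : List σ) (i : ℕ),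
        (nfY c φ).sat w i = (decide (c ≤ i) && φ.sat w (i - c))
    | c, .sym s, w, i => ypow_sat c _ w i
    | c, .mod m r, w, i => ypow_sat c _ w i
    | c, .yop φ, w, i => by
        rw [show nfY c (.yop φ) = nfY (c + 1) φ from rfl, nfY_sat (c + 1) φ w i]
        by_cases h : c + 1 ≤ i
        · have h0 : c ≤ i := by omega
          have h1 : 0 < i - c := by omega
          have h2 : i - c - 1 = i - (c + 1) := by omega
          simp [YFormula.sat, h, h0, h1, h2]
        · by_cases h0 : c ≤ i
          · have h1 : ¬ 0 < i - c := by omega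
            simp [YFormula.sat, h, h0, h1]
          · simp [YFormula.sat, h, h0]
    | c, .lt t₁ t₂, w, i => by
        rw [show nfY c (.lt t₁ t₂)
            = .and (ypow c (.mod 1 0)) (.lt (nfT c t₁) (nfT c t₂)) from rfl]
        simp only [YFormula.sat, ypow_sat]
        by_cases h : c ≤ i
        · simp [YFormula.sat, h, nfT_val c t₁ w i h, nfT_val c t₂ w i h,
            Nat.mod_one]
        · simp [YFormula.sat, h]
    | c, .not φ, w, i => by
        rw [show nfY c (.not φ) = .and (ypow c (.mod 1 0)) (.not (nfY c φ)) from rfl]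
        simp only [YFormula.sat, ypow_sat, nfY_sat c φ w i]
        by_cases h : c ≤ i
        · simp [YFormula.sat, h, Nat.mod_one]
        · simp [YFormula.sat, h]
    | c, .and φ ψ, w, i => by
        rw [show nfY c (.and φ ψ) = .and (nfY c φ) (nfY c ψ) from rfl]
        simp only [YFormula.sat, nfY_sat c φ w i, nfY_sat c ψ w i]
        by_cases h : c ≤ i
        · simp [h, Bool.and_assoc]
        · simp [h]
  lemma nfT_val {σ : Type} [DecidableEq σ] :
      ∀ (c : ℕ) (t : YTerm σ) (w : List σ) (i : ℕ), c ≤ i →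
        (nfT c t).val w i = t.val w (i - c)
    | c, .countL φ, w, i, h => by
        rw [show nfT c (.countL φ) = .countL (nfY c φ) from rfl]
        simp only [YTerm.val]
        have hfun : (fun j => (nfY c φ).sat w j)
            = fun j => decide (c ≤ j) && φ.sat w (j - c) := by
          funext j; exact nfY_sat c φ w j
        rw [hfun]
        have hn : i + 1 = c + (i - c + 1) := by omega
        rw [hn, filter_shift c (fun j => φ.sat w j) (i - c + 1)]
    | c, .add t₁ t₂, w, i, h => by
        rw [show nfT c (.add t₁ t₂) = .add (nfT c t₁) (nfT c t₂) from rfl]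
        simp only [YTerm.val, nfT_val c t₁ w i h, nfT_val c t₂ w i h]
    | _, .one, _, _, _ => rfl
end

/-- Every TL[#←,Y,MOD] formula of depth at most `k` is equivalent, position by
position, to a TL[#←,Y,MOD] formula of depth at most `k` in `Y`-normal form. -/
theorem stmt16 (σ : Type) [Fintype σ] [DecidableEq σ] (k : ℕ)
    (φ : YFormula σ) (hφ : φ.depth ≤ k) :
    ∃ φ' : YFormula σ, φ'.depth ≤ k ∧ φ'.inYNF ∧
      ∀ w : List σ, w ≠ [] → ∀ i : ℕ, i < w.length →
        (φ.sat w i = true ↔ φ'.sat w i = true) := by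
  refine ⟨nfY 0 φ, by rw [nfY_depth]; exact hφ, nfY_inYNF 0 φ, ?_⟩
  intro w _ i _
  rw [nfY_sat 0 φ w i]
  simp
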